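/- For the graph S_t^r (star of order t with r added independent edges between leaves), the 3-color Ramsey number satisfies max{5t−4, 2R_2(S_t^r)−1} ≤ R_3(S_t^r) ≤ 3R_2(S_t^r) + 6r − 6. -/

import Mathlib

open SimpleGraph

/-- A monochromatic copy of `H` in the `c`-colored complete graph on `Fin n`. -/
def IsMonoCopy {α : Type*} {n k : ℕ} (H : SimpleGraph α)
    (c : Sym2 (Fin n) → Fin k) : Prop :=
  ∃ f : α → Fin n, Function.Injective f ∧
    ∃ j : Fin k, ∀ u v : α, H.Adj u v → c s(f u, f v) = j

/-- A rainbow copy of `G` in the `c`-colored complete graph on `Fin n`. -/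
def IsRainbowCopy {α : Type*} {n k : ℕ} (G : SimpleGraph α)
    (c : Sym2 (Fin n) → Fin k) : Prop :=
  ∃ f : α → Fin n, Function.Injective f ∧
    ∀ u v u' v' : α, G.Adj u v → G.Adj u' v' →
      c s(f u, f v) = c s(f u', f v') → s(u, v) = s(u', v')

/-- An exact coloring uses every one of the `k` colors on some edge. -/
def ExactColoring {n k : ℕ} (c : Sym2 (Fin n) → Fin k) : Prop :=
  ∀ j : Fin k, ∃ u v : Fin n, u ≠ v ∧ c s(u, v) = j

/-- The Gallai-Ramsey number `gr_k(G : H)`. -/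
noncomputable def grk {α β : Type*} (k : ℕ) (G : SimpleGraph α) (H : SimpleGraph β) : ℕ :=
  sInf {N | ∀ n, N ≤ n → ∀ c : Sym2 (Fin n) → Fin k, ExactColoring c →
    IsRainbowCopy G c ∨ IsMonoCopy H c}

/-- The `j`-color Ramsey number of `H`. -/
noncomputable def RamseyNum {α : Type*} (j : ℕ) (H : SimpleGraph α) : ℕ :=
  sInf {N | ∀ n, N ≤ n → ∀ c : Sym2 (Fin n) → Fin j, IsMonoCopy H c}

/-- `S_t^r`: the star of order `t` (center `0`) with `r` independent extra edges
`(2i+1, 2i+2)`, `i < r`, between the leaves. -/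
def starPlus (t r : ℕ) : SimpleGraph (Fin t) :=
  SimpleGraph.fromRel (fun u v =>
    u.val = 0 ∨ ∃ i < r, u.val = 2 * i + 1 ∧ v.val = 2 * i + 2)

/-- The pineapple `PA_{t,ω}`: `K_ω` on `{0,…,ω-1}` with `t-ω` pendant vertices
attached to vertex `0`. -/
def pineapple (t ω : ℕ) : SimpleGraph (Fin t) :=
  SimpleGraph.fromRel (fun u v => (u.val < ω ∧ v.val < ω) ∨ u.val = 0)

/-- `K_t` minus a maximal matching `{2i, 2i+1}`. -/
def completeMinusMatching (t : ℕ) : SimpleGraph (Fin t) :=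
  SimpleGraph.fromRel (fun u v => u.val / 2 ≠ v.val / 2)



open Finset

lemma ramsey_seq (n : ℕ) (c : Sym2 (Fin n) → Fin 2) :
    ∀ (m : ℕ) (S : Finset (Fin n)), 2 ^ m ≤ S.card →
    ∃ f : Fin m → Fin n, Function.Injective f ∧ (∀ i, f i ∈ S) ∧
      ∃ g : Fin m → Fin 2, ∀ i j : Fin m, i < j → c s(f i, f j) = g i := by
  intro m
  induction m with
  | zero =>
    intro S _
    exact ⟨fun i => i.elim0, fun i => i.elim0, fun i => i.elim0,
      fun i => i.elim0, fun i => i.elim0⟩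
  | succ m ih =>
    intro S hS
    have hne : S.Nonempty := by
      rw [← Finset.card_pos]; have := Nat.one_le_two_pow (n := m + 1); omega
    obtain ⟨v, hv⟩ := hne
    set T := S.erase v with hT
    have hTcard : T.card = S.card - 1 := Finset.card_erase_of_mem hv
    set T0 := T.filter (fun u => c s(v, u) = 0) with hT0
    set T1 := T.filter (fun u => c s(v, u) = 1) with hT1
    have hcover : T ⊆ T0 ∪ T1 := by
      intro u hu
      rcases Fin.exists_fin_two.mp ⟨c s(v,u), rfl⟩ with h | h
      · exact Finset.mem_union_left _ (Finset.mem_filter.mpr ⟨hu, h⟩)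
      · exact Finset.mem_union_right _ (Finset.mem_filter.mpr ⟨hu, h⟩)
    have hcard : T.card ≤ T0.card + T1.card :=
      le_trans (Finset.card_le_card hcover) (Finset.card_union_le _ _)
    have hbig : 2 ^ m ≤ T0.card ∨ 2 ^ m ≤ T1.card := by
      by_contra h
      push_neg at h
      have : 2 ^ (m + 1) = 2 ^ m + 2 ^ m := by ring
      omega
    have key : ∃ (a : Fin 2) (Ta : Finset (Fin n)), 2 ^ m ≤ Ta.card ∧ Ta ⊆ T ∧
        ∀ u ∈ Ta, c s(v, u) = a := by
      rcases hbig with h | h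
      · exact ⟨0, T0, h, Finset.filter_subset _ _, fun u hu => (Finset.mem_filter.mp hu).2⟩
      · exact ⟨1, T1, h, Finset.filter_subset _ _, fun u hu => (Finset.mem_filter.mp hu).2⟩
    obtain ⟨a, Ta, hcard', hsub, hcol⟩ := key
    obtain ⟨f', hinj', hmem', g', hg'⟩ := ih Ta hcard'
    have hfne : ∀ i, f' i ≠ v := fun i =>
      Finset.ne_of_mem_erase (hsub (hmem' i))
    refine ⟨Fin.cases v f', ?_, ?_, Fin.cases a g', ?_⟩
    · intro i j h
      induction i using Fin.cases with
      | zero =>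
        induction j using Fin.cases with
        | zero => rfl
        | succ j => simp only [Fin.cases_zero, Fin.cases_succ] at h
                    exact absurd h.symm (hfne j)
      | succ i =>
        induction j using Fin.cases with
        | zero => simp only [Fin.cases_zero, Fin.cases_succ] at h
                  exact absurd h (hfne i)
        | succ j => simp only [Fin.cases_succ] at h
                    exact congrArg Fin.succ (hinj' h)
    · intro i
      induction i using Fin.cases with
      | zero => simpa using hv
      | succ i => simpa using (Finset.mem_of_mem_erase (hsub (hmem' i)) : f' i ∈ S)
    · intro i j hij
      induction i using Fin.cases with
      | zero =>
        induction j using Fin.cases with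
        | zero => exact absurd hij (lt_irrefl _)
        | succ j => simpa using hcol _ (hmem' j)
      | succ i =>
        induction j using Fin.cases with
        | zero => exact absurd hij (by simp [Fin.not_lt_zero, Fin.succ_pos])
        | succ j =>
          simp only [Fin.cases_succ]
          exact hg' i j (by exact_mod_cast Fin.succ_lt_succ_iff.mp hij)

lemma two_color_exists {t : ℕ} (ht : 1 ≤ t) (H : SimpleGraph (Fin t)) :
    ∀ n, 2 ^ (2 * t) ≤ n → ∀ c : Sym2 (Fin n) → Fin 2, IsMonoCopy H c := by
  intro n hn c
  obtain ⟨f, hinj, -, g, hg⟩ := ramsey_seq n c (2 * t) Finset.univ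
    (by simpa using hn)
  -- pigeonhole on g
  have hpig : ∃ j : Fin 2, t - 1 < (Finset.univ.filter (fun i => g i = j)).card := by
    obtain ⟨y, -, hy⟩ := Finset.exists_lt_card_fiber_of_mul_lt_card_of_maps_to
      (s := (Finset.univ : Finset (Fin (2*t)))) (t := (Finset.univ : Finset (Fin 2)))
      (f := g) (fun a _ => Finset.mem_univ _) (n := t - 1)
      (by simp; omega)
    exact ⟨y, hy⟩
  obtain ⟨j, hj⟩ := hpig
  set Φ := Finset.univ.filter (fun i => g i = j) with hΦ
  have hcard : t ≤ Φ.card := by omega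
  set e := Φ.orderEmbOfCardLe hcard with he
  refine ⟨fun u => f (e u), fun u v huv => ?_, j, ?_⟩
  · exact e.injective (hinj huv)
  · intro u v huv
    have hne : e u ≠ e v := fun h => huv.ne (e.injective h)
    have hmem : ∀ w, g (e w) = j := fun w =>
      (Finset.mem_filter.mp (Φ.orderEmbOfCardLe_mem hcard w)).2
    rcases lt_or_gt_of_ne hne with h | h
    · rw [hg _ _ h]; exact hmem u
    · rw [Sym2.eq_swap, hg _ _ h]; exact hmem v

lemma starPlus_adj {t r : ℕ} (u v : Fin t) :
    (starPlus t r).Adj u v ↔ u ≠ v ∧ (u.val = 0 ∨ v.val = 0 ∨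
      ∃ i < r, (u.val = 2 * i + 1 ∧ v.val = 2 * i + 2) ∨
               (v.val = 2 * i + 1 ∧ u.val = 2 * i + 2)) := by
  simp only [starPlus, SimpleGraph.fromRel_adj]
  constructor
  · rintro ⟨hne, h | h⟩
    · rcases h with h | ⟨i, hi, h1, h2⟩
      · exact ⟨hne, Or.inl h⟩
      · exact ⟨hne, Or.inr (Or.inr ⟨i, hi, Or.inl ⟨h1, h2⟩⟩)⟩
    · rcases h with h | ⟨i, hi, h1, h2⟩
      · exact ⟨hne, Or.inr (Or.inl h)⟩
      · exact ⟨hne, Or.inr (Or.inr ⟨i, hi, Or.inr ⟨h1, h2⟩⟩)⟩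
  · rintro ⟨hne, h | h | ⟨i, hi, ⟨h1, h2⟩ | ⟨h1, h2⟩⟩⟩
    · exact ⟨hne, Or.inl (Or.inl h)⟩
    · exact ⟨hne, Or.inr (Or.inl h)⟩
    · exact ⟨hne, Or.inl (Or.inr ⟨i, hi, h1, h2⟩)⟩
    · exact ⟨hne, Or.inr (Or.inr ⟨i, hi, h1, h2⟩)⟩

lemma matching_or_free (n : ℕ) (c : Sym2 (Fin n) → Fin 3) (a : Fin 3) (R2 : ℕ) :
    ∀ (k : ℕ) (A : Finset (Fin n)), R2 + 2 * k ≤ A.card + 2 →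
    (∃ p : Fin k → Fin n × Fin n,
       (∀ i, (p i).1 ∈ A ∧ (p i).2 ∈ A ∧ c s((p i).1, (p i).2) = a) ∧
       Function.Injective (fun x : Fin k × Bool => if x.2 then (p x.1).1 else (p x.1).2))
    ∨ (∃ B ⊆ A, R2 ≤ B.card ∧ ∀ x ∈ B, ∀ y ∈ B, x ≠ y → c s(x, y) ≠ a) := by
  intro k
  induction k with
  | zero =>
    intro A _
    exact Or.inl ⟨fun i => i.elim0, fun i => i.elim0, fun x => x.1.elim0⟩
  | succ k ih =>
    intro A hA
    by_cases hedge : ∃ x ∈ A, ∃ y ∈ A, x ≠ y ∧ c s(x, y) = a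
    · obtain ⟨x, hx, y, hy, hxy, hcxy⟩ := hedge
      have hyx : y ∈ A.erase x := Finset.mem_erase.mpr ⟨hxy.symm, hy⟩
      set A' := (A.erase x).erase y with hA'
      have hcardA' : A'.card = A.card - 2 := by
        rw [hA', Finset.card_erase_of_mem hyx, Finset.card_erase_of_mem hx]; omega
      have hsub : A' ⊆ A := (Finset.erase_subset _ _).trans (Finset.erase_subset _ _)
      have hAcard2 : 2 ≤ A.card := by
        have := Finset.card_le_card (show {x, y} ⊆ A by
          intro z hz; rcases Finset.mem_insert.mp hz with h | h
          · exact h ▸ hx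
          · exact (Finset.mem_singleton.mp h) ▸ hy)
        rwa [Finset.card_pair hxy] at this
      rcases ih A' (by omega) with ⟨p', hp', hpinj'⟩ | ⟨B, hB, hBc, hBf⟩
      · set p : Fin (k+1) → Fin n × Fin n := Fin.cases (x, y) p' with hp
        have hP0 : p 0 = (x, y) := by simp [hp]
        have hPS : ∀ i : Fin k, p i.succ = p' i := by intro i; simp [hp]
        have hne1 : ∀ i : Fin k, (p' i).1 ≠ x ∧ (p' i).1 ≠ y ∧ (p' i).2 ≠ x ∧ (p' i).2 ≠ y := by
          intro i
          have h1 := (hp' i).1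
          have h2 := (hp' i).2.1
          rw [hA'] at h1 h2
          exact ⟨fun h => (Finset.mem_erase.mp (Finset.mem_of_mem_erase h1)).1 h,
            fun h => (Finset.mem_erase.mp h1).1 h,
            fun h => (Finset.mem_erase.mp (Finset.mem_of_mem_erase h2)).1 h,
            fun h => (Finset.mem_erase.mp h2).1 h⟩
        refine Or.inl ⟨p, ?_, ?_⟩
        · intro i
          induction i using Fin.cases with
          | zero => rw [hP0]; exact ⟨hx, hy, hcxy⟩
          | succ i =>
            rw [hPS i]
            exact ⟨hsub (hp' i).1, hsub (hp' i).2.1, (hp' i).2.2⟩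
        · rintro ⟨i1, b1⟩ ⟨i2, b2⟩ h
          dsimp only at h
          induction i1 using Fin.cases with
          | zero =>
            induction i2 using Fin.cases with
            | zero =>
              rw [hP0] at h
              cases b1 <;> cases b2 <;>
                simp only [ite_true, ite_false, Bool.false_eq_true] at h <;>
                first
                | rfl
                | exact absurd h hxy
                | exact absurd h.symm hxy
            | succ i2 =>
              rw [hP0, hPS i2] at h
              cases b1 <;> cases b2 <;>
                simp only [ite_true, ite_false, Bool.false_eq_true] at h <;>
                first
                | exact absurd h.symm (hne1 i2).2.2.2
                | exact absurd h.symm (hne1 i2).2.1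
                | exact absurd h.symm (hne1 i2).2.2.1
                | exact absurd h.symm (hne1 i2).1
          | succ i1 =>
            induction i2 using Fin.cases with
            | zero =>
              rw [hP0, hPS i1] at h
              cases b1 <;> cases b2 <;>
                simp only [ite_true, ite_false, Bool.false_eq_true] at h <;>
                first
                | exact absurd h (hne1 i1).2.2.2
                | exact absurd h (hne1 i1).2.1
                | exact absurd h (hne1 i1).2.2.1
                | exact absurd h (hne1 i1).1
            | succ i2 =>
              rw [hPS i1, hPS i2] at h
              have h2 := hpinj' (a₁ := (i1, b1)) (a₂ := (i2, b2)) h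
              rw [Prod.ext_iff] at h2 ⊢
              exact ⟨congrArg Fin.succ h2.1, h2.2⟩
      · exact Or.inr ⟨B, hB.trans hsub, hBc, hBf⟩
    · push_neg at hedge
      exact Or.inr ⟨A, Finset.Subset.refl _, by omega, hedge⟩

set_option maxHeartbeats 1000000 in
lemma upper_mem (t r : ℕ) (hr : 1 ≤ r) (ht : 2 * r + 2 ≤ t) (R2 : ℕ) (hR2t : t ≤ R2)
    (hR2 : ∀ m, R2 ≤ m → ∀ c2 : Sym2 (Fin m) → Fin 2, IsMonoCopy (starPlus t r) c2)
    (n : ℕ) (hn : 3 * R2 + (6 * r - 6) ≤ n) (c : Sym2 (Fin n) → Fin 3) :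
    IsMonoCopy (starPlus t r) c := by
  have h4 : 4 ≤ R2 := by omega
  have hn0 : 0 < n := by omega
  set v0 : Fin n := ⟨0, hn0⟩ with hv0
  obtain ⟨a, -, ha⟩ := Finset.exists_lt_card_fiber_of_mul_lt_card_of_maps_to
    (s := Finset.univ.erase v0) (t := (univ : Finset (Fin 3)))
    (f := fun u => c s(v0, u)) (fun u _ => mem_univ _) (n := R2 + 2 * r - 3)
    (by rw [Finset.card_erase_of_mem (Finset.mem_univ v0), Finset.card_univ,
          Finset.card_univ, Fintype.card_fin, Fintype.card_fin]; omega)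
  set A := (Finset.univ.erase v0).filter (fun u => c s(v0, u) = a) with hA
  have hAprop : ∀ u ∈ A, u ≠ v0 ∧ c s(v0, u) = a := fun u hu =>
    ⟨Finset.ne_of_mem_erase (Finset.mem_filter.mp hu).1, (Finset.mem_filter.mp hu).2⟩
  have hAcard : R2 + 2 * r - 2 ≤ A.card := by omega
  rcases matching_or_free n c a R2 r A (by omega) with ⟨p, hp, hpinj⟩ | ⟨B, hBA, hBcard, hBfree⟩
  · -- Case 1: a matching of r color-a edges inside A
    set ep : Fin r × Bool → Fin n := fun x => if x.2 then (p x.1).1 else (p x.1).2 with hep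
    set M := Finset.image ep Finset.univ with hM
    have hMcard : M.card ≤ 2 * r := by
      have h1 : M.card ≤ (Finset.univ : Finset (Fin r × Bool)).card := Finset.card_image_le
      have h2 : (Finset.univ : Finset (Fin r × Bool)).card = r * 2 := by simp
      omega
    set C := A \ M with hC
    have hCcard : t - 1 - 2 * r ≤ C.card := by
      have h5 := Finset.le_card_sdiff M A
      rw [← hC] at h5
      omega
    set q := C.orderEmbOfCardLe hCcard with hq
    have hqC : ∀ i, q i ∈ C := fun i => C.orderEmbOfCardLe_mem hCcard i
    have ht0 : 0 < t := by omega
    set F : Fin t → Fin n := fun j =>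
      if h0 : j.val = 0 then v0
      else if hm : j.val ≤ 2 * r then
        (if j.val % 2 = 1 then (p ⟨(j.val - 1) / 2, by omega⟩).1
         else (p ⟨(j.val - 1) / 2, by omega⟩).2)
      else q ⟨j.val - (2 * r + 1), by have := j.isLt; omega⟩ with hF
    have hF0 : ∀ j : Fin t, j.val = 0 → F j = v0 := by
      intro j hj; simp [hF, hj]
    have hFmid1 : ∀ (j : Fin t) (i : Fin r), j.val = 2 * i.val + 1 → F j = (p i).1 := by
      intro j i hj
      have hi := i.isLt
      simp only [hF]
      rw [dif_neg (by omega), dif_pos (by omega), if_pos (by omega)]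
      exact congrArg (fun z => (p z).1) (Fin.ext (by simp; omega))
    have hFmid2 : ∀ (j : Fin t) (i : Fin r), j.val = 2 * i.val + 2 → F j = (p i).2 := by
      intro j i hj
      have hi := i.isLt
      simp only [hF]
      rw [dif_neg (by omega), dif_pos (by omega), if_neg (by omega)]
      exact congrArg (fun z => (p z).2) (Fin.ext (by simp; omega))
    have hFhigh : ∀ j : Fin t, 2 * r + 1 ≤ j.val → F j ∈ C := by
      intro j hj
      simp only [hF]
      rw [dif_neg (by omega), dif_neg (by omega)]
      exact hqC _
    have hFhighEq : ∀ j : Fin t, ¬ j.val = 0 → ¬ j.val ≤ 2 * r →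
        F j = q ⟨j.val - (2 * r + 1), by have := j.isLt; omega⟩ := by
      intro j h0 hm
      simp only [hF]
      rw [dif_neg h0, dif_neg hm]
    have hmidrep : ∀ j : Fin t, j.val ≠ 0 → j.val ≤ 2 * r → ∃ x : Fin r × Bool,
        F j = ep x ∧ j.val = 2 * x.1.val + (if x.2 then 1 else 2) := by
      intro j hj hm
      rcases Nat.even_or_odd j.val with he | ho
      · obtain ⟨m', hm2⟩ := he
        refine ⟨(⟨m' - 1, by omega⟩, false), ?_, ?_⟩
        · exact hFmid2 j ⟨m' - 1, by omega⟩ (by simp; omega)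
        · simp; omega
      · obtain ⟨m', hm2⟩ := ho
        refine ⟨(⟨m', by omega⟩, true), ?_, ?_⟩
        · exact hFmid1 j ⟨m', by omega⟩ (by simp; omega)
        · simp; omega
    have hFA : ∀ j : Fin t, j.val ≠ 0 → F j ∈ A := by
      intro j hj
      by_cases hm : j.val ≤ 2 * r
      · obtain ⟨⟨i, b⟩, hx, -⟩ := hmidrep j hj hm
        rw [hx]
        cases b
        · simpa [hep] using (hp i).2.1
        · simpa [hep] using (hp i).1
      · exact Finset.sdiff_subset (hFhigh j (by omega))
    have hFinj : Function.Injective F := by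
      intro j1 j2 h
      by_cases h10 : j1.val = 0 <;> by_cases h20 : j2.val = 0
      · exact Fin.ext (by omega)
      · exact absurd ((hF0 j1 h10) ▸ h).symm (hAprop _ (hFA j2 h20)).1
      · exact absurd ((hF0 j2 h20) ▸ h) (hAprop _ (hFA j1 h10)).1
      · by_cases h1m : j1.val ≤ 2 * r <;> by_cases h2m : j2.val ≤ 2 * r
        · obtain ⟨x1, hx1, hj1⟩ := hmidrep j1 h10 h1m
          obtain ⟨x2, hx2, hj2⟩ := hmidrep j2 h20 h2m
          rw [hx1, hx2] at h
          have hx12 : x1 = x2 := hpinj h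
          rw [hx12] at hj1
          exact Fin.ext (hj1.trans hj2.symm)
        · exfalso
          obtain ⟨x1, hx1, -⟩ := hmidrep j1 h10 h1m
          have hM1 : F j1 ∈ M := hx1 ▸ Finset.mem_image_of_mem ep (Finset.mem_univ x1)
          have hC2 := hFhigh j2 (by omega)
          rw [hC, Finset.mem_sdiff] at hC2
          exact hC2.2 (h ▸ hM1)
        · exfalso
          obtain ⟨x2, hx2, -⟩ := hmidrep j2 h20 h2m
          have hM2 : F j2 ∈ M := hx2 ▸ Finset.mem_image_of_mem ep (Finset.mem_univ x2)
          have hC1 := hFhigh j1 (by omega)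
          rw [hC, Finset.mem_sdiff] at hC1
          exact hC1.2 (h ▸ hM2)
        · rw [hFhighEq j1 h10 h1m, hFhighEq j2 h20 h2m] at h
          have h6 := congrArg Fin.val (q.injective h)
          simp only [] at h6
          exact Fin.ext (by omega)
    refine ⟨F, hFinj, a, ?_⟩
    intro u v hadj
    rw [starPlus_adj] at hadj
    obtain ⟨hne, hcase⟩ := hadj
    rcases hcase with h | h | ⟨i, hi, ⟨h1, h2⟩ | ⟨h1, h2⟩⟩
    · rw [hF0 u h]
      exact (hAprop _ (hFA v (fun hv => hne (Fin.ext (by omega))))).2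
    · rw [hF0 v h, Sym2.eq_swap]
      exact (hAprop _ (hFA u (fun hu => hne (Fin.ext (by omega))))).2
    · rw [hFmid1 u ⟨i, hi⟩ h1, hFmid2 v ⟨i, hi⟩ h2]
      exact (hp ⟨i, hi⟩).2.2
    · rw [hFmid1 v ⟨i, hi⟩ h1, hFmid2 u ⟨i, hi⟩ h2, Sym2.eq_swap]
      exact (hp ⟨i, hi⟩).2.2
  · -- Case 2: an a-free subset of size ≥ R2
    set e := B.orderEmbOfFin (rfl : B.card = B.card) with he
    set b1 : Fin 3 := if a = 0 then 1 else 0 with hb1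
    set b2 : Fin 3 := if a = 2 then 1 else 2 with hb2
    have hcov : ∀ x : Fin 3, x ≠ a → x = b1 ∨ x = b2 := by
      have h : ∀ a x : Fin 3, x ≠ a →
          x = (if a = 0 then (1 : Fin 3) else 0) ∨ x = (if a = 2 then (1 : Fin 3) else 2) := by
        decide
      exact h a
    set c2 : Sym2 (Fin B.card) → Fin 2 := fun z => if c (z.map e) = b1 then 0 else 1 with hc2
    obtain ⟨f, hfinj, j, hf⟩ := hR2 B.card hBcard c2
    have hmem : ∀ w, (e w : Fin n) ∈ B := fun w => B.orderEmbOfFin_mem rfl w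
    refine ⟨fun u => e (f u), fun u v h => hfinj (e.injective h), if j = 0 then b1 else b2, ?_⟩
    intro u v hadj
    have h2 := hf u v hadj
    have hmap : c2 s(f u, f v) = if c s(e (f u), e (f v)) = b1 then 0 else 1 := by
      simp only [hc2, Sym2.map_pair_eq]
    rw [hmap] at h2
    have hnee : (e (f u) : Fin n) ≠ e (f v) := by
      intro hh
      exact hadj.ne (hfinj (e.injective hh))
    by_cases hj : j = 0
    · rw [if_pos hj]
      by_cases hcond : c s(e (f u), e (f v)) = b1
      · exact hcond
      · rw [if_neg hcond, hj] at h2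
        exact absurd h2 (by decide)
    · rw [if_neg hj]
      by_cases hcond : c s(e (f u), e (f v)) = b1
      · rw [if_pos hcond] at h2
        exact absurd h2.symm hj
      · rcases hcov _ (hBfree _ (hmem (f u)) _ (hmem (f v)) hnee) with hb | hb
        · exact absurd hb hcond
        · exact hb

def lbcol (t : ℕ) (u v : Fin (5 * (t - 1))) : Fin 3 :=
  if u.val / (t-1) = v.val / (t-1) then 2
  else if (u.val / (t-1) + 1) % 5 = v.val / (t-1) ∨ (v.val / (t-1) + 1) % 5 = u.val / (t-1)
    then 0 else 1

lemma lbcol_symm (t : ℕ) : ∀ u v, lbcol t u v = lbcol t v u := by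
  intro u v
  unfold lbcol
  split_ifs <;> first | rfl | (exfalso; omega)

lemma c5_free (g i k j : ℕ) (hg : g < 5) (hi : i < 5) (hk : k < 5)
    (h01 : g ≠ i ∧ (((g+1)%5 = i ∨ (i+1)%5 = g) ↔ j = 0))
    (h02 : g ≠ k ∧ (((g+1)%5 = k ∨ (k+1)%5 = g) ↔ j = 0))
    (h12 : i ≠ k ∧ (((i+1)%5 = k ∨ (k+1)%5 = i) ↔ j = 0)) : False := by omega

set_option maxHeartbeats 1000000 in
lemma lb1 (t r : ℕ) (hr : 1 ≤ r) (ht : 2 * r + 2 ≤ t) :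
    ∃ c : Sym2 (Fin (5 * (t - 1))) → Fin 3, ¬ IsMonoCopy (starPlus t r) c := by
  have htm : 1 ≤ t - 1 := by omega
  refine ⟨Sym2.lift ⟨lbcol t, lbcol_symm t⟩, ?_⟩
  · rintro ⟨f, hinj, j, hmono⟩
    have heval : ∀ x y : Fin (5 * (t-1)),
        Sym2.lift ⟨lbcol t, lbcol_symm t⟩ s(x, y) =
        if x.val / (t-1) = y.val / (t-1) then 2
        else if (x.val / (t-1) + 1) % 5 = y.val / (t-1) ∨ (y.val / (t-1) + 1) % 5 = x.val / (t-1)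
          then 0 else 1 := fun x y => Sym2.lift_mk _ x y
    set z0 : Fin t := ⟨0, by omega⟩ with hz0
    have hdivlt : ∀ x : Fin (5 * (t-1)), x.val / (t-1) < 5 := by
      intro x
      rw [Nat.div_lt_iff_lt_mul (by omega)]
      have := x.isLt; omega
    by_cases hj2 : j.val = 2
    · -- color 2 : all vertices in the same block
      have hpart : ∀ u : Fin t, u.val ≠ 0 → (f u).val / (t-1) = (f z0).val / (t-1) := by
        intro u hu
        have hadj : (starPlus t r).Adj z0 u :=
          (starPlus_adj _ _).mpr ⟨Fin.ne_of_val_ne (show (0:ℕ) ≠ u.val by omega), Or.inl rfl⟩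
        have h := hmono z0 u hadj
        rw [heval] at h
        by_contra hne
        rw [if_neg (fun hh => hne hh.symm)] at h
        have hval := congrArg Fin.val h
        split_ifs at h with h2
        · have := congrArg Fin.val h; simp at this; omega
        · have := congrArg Fin.val h; simp at this; omega
      have hginj : Function.Injective (fun u : Fin t =>
          (⟨(f u).val % (t-1), Nat.mod_lt _ (by omega)⟩ : Fin (t-1))) := by
        intro u v h
        have hmod := congrArg Fin.val h
        simp only [] at hmod
        have hdu : (f u).val / (t-1) = (f z0).val / (t-1) := by
          by_cases hu : u.val = 0
          · rw [show u = z0 from Fin.ext hu]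
          · exact hpart u hu
        have hdv : (f v).val / (t-1) = (f z0).val / (t-1) := by
          by_cases hv : v.val = 0
          · rw [show v = z0 from Fin.ext hv]
          · exact hpart v hv
        have e1 := Nat.div_add_mod (f u).val (t-1)
        have e2 := Nat.div_add_mod (f v).val (t-1)
        apply hinj
        apply Fin.ext
        calc (f u).val = (t-1) * ((f u).val / (t-1)) + (f u).val % (t-1) := e1.symm
          _ = (t-1) * ((f v).val / (t-1)) + (f v).val % (t-1) := by rw [hdu, hdv, hmod]
          _ = (f v).val := e2
      have := Fintype.card_le_of_injective _ hginj
      simp only [Fintype.card_fin] at this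
      omega
    · -- colors 0/1 : triangle in a blow-up of C5 or its complement
      have key : ∀ x y : Fin t, (starPlus t r).Adj x y →
          (f x).val / (t-1) ≠ (f y).val / (t-1) ∧
          ((((f x).val / (t-1) + 1) % 5 = (f y).val / (t-1) ∨
            ((f y).val / (t-1) + 1) % 5 = (f x).val / (t-1)) ↔ j.val = 0) := by
        intro x y hxy
        have h := hmono x y hxy
        rw [heval] at h
        split_ifs at h with h1 h2
        · exfalso; have := congrArg Fin.val h; simp at this; omega
        · refine ⟨h1, iff_of_true h2 ?_⟩
          have := congrArg Fin.val h; simp at this; omega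
        · refine ⟨h1, iff_of_false h2 ?_⟩
          have := congrArg Fin.val h; simp at this; omega
      have hjlt := j.isLt
      set z1 : Fin t := ⟨1, by omega⟩ with hz1
      set z2 : Fin t := ⟨2, by omega⟩ with hz2
      have h01 := key z0 z1 ((starPlus_adj _ _).mpr
        ⟨Fin.ne_of_val_ne (by norm_num), Or.inl rfl⟩)
      have h02 := key z0 z2 ((starPlus_adj _ _).mpr
        ⟨Fin.ne_of_val_ne (by norm_num), Or.inl rfl⟩)
      have h12 := key z1 z2 ((starPlus_adj _ _).mpr
        ⟨Fin.ne_of_val_ne (by norm_num), Or.inr (Or.inr ⟨0, hr, Or.inl ⟨by norm_num, by norm_num⟩⟩)⟩)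
      have hj0 : (j.val = 0) = (j.val = 0) := rfl
      refine c5_free ((f z0).val / (t-1)) ((f z1).val / (t-1)) ((f z2).val / (t-1)) j.val
        (hdivlt (f z0)) (hdivlt (f z1)) (hdivlt (f z2)) h01 h02 h12

def dblcol (n : ℕ) (hn : 0 < n) (c2 : Sym2 (Fin n) → Fin 2)
    (u v : Fin (2 * n)) : Fin 3 :=
  if u.val < n ↔ v.val < n then
    Fin.castLE (by omega)
      (c2 s(⟨u.val % n, Nat.mod_lt _ hn⟩, ⟨v.val % n, Nat.mod_lt _ hn⟩))
  else 2

lemma dblcol_symm (n : ℕ) (hn : 0 < n) (c2 : Sym2 (Fin n) → Fin 2) :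
    ∀ u v, dblcol n hn c2 u v = dblcol n hn c2 v u := by
  intro u v
  unfold dblcol
  by_cases h : u.val < n ↔ v.val < n
  · rw [if_pos h, if_pos h.symm]
    exact congrArg _ (congrArg c2 Sym2.eq_swap)
  · rw [if_neg h, if_neg (fun hh => h hh.symm)]

set_option maxHeartbeats 1000000 in
lemma lb2 (t r : ℕ) (hr : 1 ≤ r) (ht : 2 * r + 2 ≤ t) (n : ℕ) (hn : 0 < n)
    (c2 : Sym2 (Fin n) → Fin 2) (hc2 : ¬ IsMonoCopy (starPlus t r) c2) :
    ∃ c : Sym2 (Fin (2 * n)) → Fin 3, ¬ IsMonoCopy (starPlus t r) c := by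
  refine ⟨Sym2.lift ⟨dblcol n hn c2, dblcol_symm n hn c2⟩, ?_⟩
  rintro ⟨f, hinj, j, hmono⟩
  have heval : ∀ x y : Fin (2 * n),
      Sym2.lift ⟨dblcol n hn c2, dblcol_symm n hn c2⟩ s(x, y) = dblcol n hn c2 x y :=
    fun x y => Sym2.lift_mk _ x y
  set z0 : Fin t := ⟨0, by omega⟩ with hz0
  set z1 : Fin t := ⟨1, by omega⟩ with hz1
  set z2 : Fin t := ⟨2, by omega⟩ with hz2
  have hadj01 : (starPlus t r).Adj z0 z1 :=
    (starPlus_adj _ _).mpr ⟨Fin.ne_of_val_ne (by norm_num), Or.inl rfl⟩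
  have hadj02 : (starPlus t r).Adj z0 z2 :=
    (starPlus_adj _ _).mpr ⟨Fin.ne_of_val_ne (by norm_num), Or.inl rfl⟩
  have hadj12 : (starPlus t r).Adj z1 z2 :=
    (starPlus_adj _ _).mpr ⟨Fin.ne_of_val_ne (by norm_num),
      Or.inr (Or.inr ⟨0, hr, Or.inl ⟨by norm_num, by norm_num⟩⟩)⟩
  by_cases hj2 : j.val = 2
  · -- color 2 is bipartite between the halves: no triangle
    have hcross : ∀ x y : Fin t, (starPlus t r).Adj x y →
        ¬ ((f x).val < n ↔ (f y).val < n) := by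
      intro x y hxy hiff
      have h := hmono x y hxy
      rw [heval] at h
      unfold dblcol at h
      rw [if_pos hiff] at h
      have := congrArg Fin.val h
      have hlt : (c2 s(⟨(f x).val % n, Nat.mod_lt _ hn⟩, ⟨(f y).val % n, Nat.mod_lt _ hn⟩)).val < 2 :=
        (c2 _).isLt
      simp only [Fin.coe_castLE] at this
      omega
    have h1 := hcross z0 z1 hadj01
    have h2 := hcross z0 z2 hadj02
    have h3 := hcross z1 z2 hadj12
    tauto
  · -- colors 0/1 live inside a half
    have hsame : ∀ x y : Fin t, (starPlus t r).Adj x y →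
        ((f x).val < n ↔ (f y).val < n) := by
      intro x y hxy
      by_contra hiff
      have h := hmono x y hxy
      rw [heval] at h
      unfold dblcol at h
      rw [if_neg hiff] at h
      have := congrArg Fin.val h
      rw [show ((2 : Fin 3) : ℕ) = 2 from rfl] at this
      omega
    have hsame0 : ∀ u : Fin t, ((f u).val < n ↔ (f z0).val < n) := by
      intro u
      by_cases hu : u.val = 0
      · rw [show u = z0 from Fin.ext hu]
      · exact (hsame z0 u ((starPlus_adj _ _).mpr
          ⟨Fin.ne_of_val_ne (show (0:ℕ) ≠ u.val by omega), Or.inl rfl⟩)).symm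
    set f' : Fin t → Fin n := fun u => ⟨(f u).val % n, Nat.mod_lt _ hn⟩ with hf'
    have hmodeq : ∀ u : Fin t, (f u).val % n =
        if (f u).val < n then (f u).val else (f u).val - n := by
      intro u
      by_cases h : (f u).val < n
      · rw [if_pos h, Nat.mod_eq_of_lt h]
      · rw [if_neg h, Nat.mod_eq_sub_mod (by omega),
          Nat.mod_eq_of_lt (by have := (f u).isLt; omega)]
    have hf'inj : Function.Injective f' := by
      intro u v h
      have hmod : (f u).val % n = (f v).val % n := congrArg Fin.val h
      rw [hmodeq u, hmodeq v] at hmod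
      have hiff : ((f u).val < n ↔ (f v).val < n) := (hsame0 u).trans (hsame0 v).symm
      have hlu := (f u).isLt
      have hlv := (f v).isLt
      apply hinj
      apply Fin.ext
      by_cases hu : (f u).val < n
      · rw [if_pos hu, if_pos (hiff.mp hu)] at hmod
        exact hmod
      · rw [if_neg hu, if_neg (fun hh => hu (hiff.mpr hh))] at hmod
        omega
    have hjlt : j.val < 2 := by have := j.isLt; omega
    apply hc2
    refine ⟨f', hf'inj, ⟨j.val, hjlt⟩, ?_⟩
    intro u v huv
    have h := hmono u v huv
    rw [heval] at h
    unfold dblcol at h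
    rw [if_pos ((hsame0 u).trans (hsame0 v).symm)] at h
    have := congrArg Fin.val h
    simp only [Fin.coe_castLE] at this
    exact Fin.ext this


def RamseySet (j : ℕ) {α : Type*} (H : SimpleGraph α) : Set ℕ :=
  {N | ∀ n, N ≤ n → ∀ c : Sym2 (Fin n) → Fin j, IsMonoCopy H c}

lemma RamseyNum_eq {α : Type*} (j : ℕ) (H : SimpleGraph α) :
    RamseyNum j H = sInf (RamseySet j H) := rfl

theorem stmt13 (t r : ℕ) (hr : 1 ≤ r) (ht : 2 * r + 2 ≤ t) :
    max (5 * t - 4) (2 * RamseyNum 2 (starPlus t r) - 1) ≤ RamseyNum 3 (starPlus t r) ∧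
      RamseyNum 3 (starPlus t r) ≤ 3 * RamseyNum 2 (starPlus t r) + 6 * r - 6 := by
  have hS2mem : (2:ℕ)^(2*t) ∈ RamseySet 2 (starPlus t r) :=
    fun n hn c => two_color_exists (by omega) (starPlus t r) n hn c
  have hR2mem : sInf (RamseySet 2 (starPlus t r)) ∈ RamseySet 2 (starPlus t r) :=
    Nat.sInf_mem ⟨_, hS2mem⟩
  set R2 := sInf (RamseySet 2 (starPlus t r)) with hR2
  have hR2t : t ≤ R2 := by
    obtain ⟨f, hfinj, -⟩ := hR2mem R2 le_rfl (fun _ => 0)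
    simpa using Fintype.card_le_of_injective f hfinj
  have hmem3 : (3 * R2 + (6 * r - 6)) ∈ RamseySet 3 (starPlus t r) :=
    fun n hn c => upper_mem t r hr ht R2 hR2t hR2mem n hn c
  have claim1 : ∀ N ∈ RamseySet 3 (starPlus t r), 5 * t - 4 ≤ N := by
    intro N hN
    by_contra hcon
    obtain ⟨c, hc⟩ := lb1 t r hr ht
    exact hc (hN (5 * (t - 1)) (by omega) c)
  have claim2 : ∀ N ∈ RamseySet 3 (starPlus t r), 2 * R2 - 1 ≤ N := by
    intro N hN
    by_contra hcon
    have hnot : R2 - 1 ∉ RamseySet 2 (starPlus t r) :=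
      Nat.notMem_of_lt_sInf (by rw [← hR2]; omega)
    simp only [RamseySet, Set.mem_setOf_eq] at hnot
    push_neg at hnot
    obtain ⟨n, hn1, c2, hc2⟩ := hnot
    obtain ⟨c, hc⟩ := lb2 t r hr ht n (by omega) c2 hc2
    exact hc (hN (2 * n) (by omega) c)
  constructor
  · rw [RamseyNum_eq, RamseyNum_eq, ← hR2]
    exact le_csInf ⟨_, hmem3⟩ (fun N hN => max_le (claim1 N hN) (claim2 N hN))
  · rw [RamseyNum_eq, RamseyNum_eq, ← hR2]
    have := Nat.sInf_le hmem3
    omega
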